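/- Suppose Y_1, Y_2, Y_3 are holomorphic symplectic varieties and L_{12} ⊂ Y_1 × Y_2, L_{23} ⊂ Y_2 × Y_3 are smooth Lagrangian subvarieties. If the projection π_{13} from the scheme-theoretic intersection π_{12}^{-1}(L_{12}) ∩ π_{23}^{-1}(L_{23}) to Y_1 × Y_3 is an isomorphism onto its image, then the intersection π_{12}^{-1}(L_{12}) ∩ π_{23}^{-1}(L_{23}) ⊂ Y_1 × Y_2 × Y_3 is transverse. -/

import Mathlib

/-- A holomorphic symplectic variety, recorded through its points and its (holomorphic)
tangent spaces: at each point `p` the tangent space `T p` is a finite dimensional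
`ℂ`-vector space equipped with a bilinear, alternating, nondegenerate form (the value at
`p` of the holomorphic symplectic form). -/
structure HoloSymplVariety where
  pt : Type
  T : pt → Type
  [acg : ∀ p, AddCommGroup (T p)]
  [mod : ∀ p, Module ℂ (T p)]
  [fd : ∀ p, FiniteDimensional ℂ (T p)]
  form : ∀ p, T p → T p → ℂ
  form_left : ∀ p (c : ℂ) (u v w : T p), form p (c • u + v) w = c * form p u w + form p v w
  form_right : ∀ p (c : ℂ) (u v w : T p), form p u (c • v + w) = c * form p u v + form p u w
  form_alt : ∀ p (v : T p), form p v v = 0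
  form_nondeg : ∀ p (v : T p), (∀ u, form p v u = 0) → v = 0

attribute [instance] HoloSymplVariety.acg HoloSymplVariety.mod HoloSymplVariety.fd

/-- The product symplectic form on `T_p Y₁ × T_q Y₂`. -/
def HoloSymplVariety.prodForm (Y₁ Y₂ : HoloSymplVariety) (p : Y₁.pt) (q : Y₂.pt)
    (x y : Y₁.T p × Y₂.T q) : ℂ :=
  Y₁.form p x.1 y.1 + Y₂.form q x.2 y.2

/-- A subspace of `T_p Y₁ × T_q Y₂` is Lagrangian when the product symplectic form
vanishes on it and it is half-dimensional. -/
def IsLagrangianSubspace (Y₁ Y₂ : HoloSymplVariety) (p : Y₁.pt) (q : Y₂.pt)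
    (L : Submodule ℂ (Y₁.T p × Y₂.T q)) : Prop :=
  (∀ x ∈ L, ∀ y ∈ L, Y₁.prodForm Y₂ p q x y = 0) ∧
    2 * Module.finrank ℂ L = Module.finrank ℂ (Y₁.T p × Y₂.T q)

/-- A smooth Lagrangian subvariety `L ⊂ Y₁ × Y₂`: a set of points together with its
tangent spaces, each of which is a Lagrangian subspace for the product symplectic
structure. -/
structure SmoothLagrangian (Y₁ Y₂ : HoloSymplVariety) where
  L : Set (Y₁.pt × Y₂.pt)
  tangent : ∀ p : Y₁.pt × Y₂.pt, p ∈ L → Submodule ℂ (Y₁.T p.1 × Y₂.T p.2)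
  lagrangian : ∀ p hp, IsLagrangianSubspace Y₁ Y₂ p.1 p.2 (tangent p hp)

section Projections

variable (Y₁ Y₂ Y₃ : HoloSymplVariety) (p₁ : Y₁.pt) (p₂ : Y₂.pt) (p₃ : Y₃.pt)

/-- The differential of the projection `π₁₂ : Y₁ × Y₂ × Y₃ → Y₁ × Y₂`. -/
def dpi12 : (Y₁.T p₁ × Y₂.T p₂ × Y₃.T p₃) →ₗ[ℂ] Y₁.T p₁ × Y₂.T p₂ :=
  LinearMap.prod (LinearMap.fst ℂ _ _) ((LinearMap.fst ℂ _ _).comp (LinearMap.snd ℂ _ _))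

/-- The differential of the projection `π₂₃ : Y₁ × Y₂ × Y₃ → Y₂ × Y₃`. -/
def dpi23 : (Y₁.T p₁ × Y₂.T p₂ × Y₃.T p₃) →ₗ[ℂ] Y₂.T p₂ × Y₃.T p₃ :=
  LinearMap.snd ℂ _ _

/-- The differential of the projection `π₁₃ : Y₁ × Y₂ × Y₃ → Y₁ × Y₃`. -/
def dpi13 : (Y₁.T p₁ × Y₂.T p₂ × Y₃.T p₃) →ₗ[ℂ] Y₁.T p₁ × Y₃.T p₃ :=
  LinearMap.prod (LinearMap.fst ℂ _ _) ((LinearMap.snd ℂ _ _).comp (LinearMap.snd ℂ _ _))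

end Projections

/-!
At a point of the intersection, write `Λ₁₂ = T L₁₂` and `Λ₂₃ = T L₂₃`. A Lagrangian subspace is
its own symplectic orthogonal, so inside `T Y₂` the symplectic orthogonal of the projection of
`Λ₁₂` is the vertical part `{v | (0, v) ∈ Λ₁₂}`, and likewise for `Λ₂₃`. If `v` lies in both
vertical parts, then `(0, v, 0)` is a tangent vector to the intersection killed by `dπ₁₃`, so
`v = 0`; hence the two projections span `T Y₂`, so `π₁₂⁻¹ Λ₁₂ + π₂₃⁻¹ Λ₂₃` is the whole tangent
space, and the dimension formula for the intersection is the dimension formula for a sum of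
subspaces.
-/

open Module
open LinearMap (BilinForm)

namespace LinearMap

namespace BilinForm

section Prod

variable {R M₁ M₂ : Type*} [CommSemiring R] [AddCommMonoid M₁] [Module R M₁]
  [AddCommMonoid M₂] [Module R M₂] {B₁ : BilinForm R M₁} {B₂ : BilinForm R M₂}

def prod (B₁ : BilinForm R M₁) (B₂ : BilinForm R M₂) : BilinForm R (M₁ × M₂) :=
  B₁.compl₁₂ (fst R M₁ M₂) (fst R M₁ M₂) + B₂.compl₁₂ (snd R M₁ M₂) (snd R M₁ M₂)

@[simp]
lemma prod_apply (x y : M₁ × M₂) : B₁.prod B₂ x y = B₁ x.1 y.1 + B₂ x.2 y.2 := rfl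

lemma Nondegenerate.prod (h₁ : B₁.Nondegenerate) (h₂ : B₂.Nondegenerate) :
    (B₁.prod B₂).Nondegenerate :=
  ⟨fun x hx => Prod.ext (h₁.1 x.1 fun u => by simpa using hx (u, 0))
      (h₂.1 x.2 fun v => by simpa using hx (0, v)),
    fun y hy => Prod.ext (h₁.2 y.1 fun u => by simpa using hy (u, 0))
      (h₂.2 y.2 fun v => by simpa using hy (0, v))⟩

variable {Λ : Submodule R (M₁ × M₂)}

lemma orthogonal_map_snd_of_orthogonal_eq_self (hΛ : (B₁.prod B₂).orthogonal Λ = Λ) :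
    B₂.orthogonal (Λ.map (snd R M₁ M₂)) = Λ.comap (inr R M₁ M₂) := by
  ext v
  conv_rhs => rw [Submodule.mem_comap, ← hΛ]
  simpa using forall_comm

lemma orthogonal_map_fst_of_orthogonal_eq_self (hΛ : (B₁.prod B₂).orthogonal Λ = Λ) :
    B₁.orthogonal (Λ.map (fst R M₁ M₂)) = Λ.comap (inl R M₁ M₂) := by
  ext v
  conv_rhs => rw [Submodule.mem_comap, ← hΛ]
  simp

end Prod

section Field

variable {K V : Type*} [Field K] [AddCommGroup V] [Module K V] [FiniteDimensional K V]
  {B : BilinForm K V}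

lemma orthogonal_eq_self_of_isotropic (hB : B.Nondegenerate) {L : Submodule K V}
    (hL : ∀ x ∈ L, ∀ y ∈ L, B x y = 0) (hdim : 2 * finrank K L = finrank K V) :
    B.orthogonal L = L :=
  (Submodule.eq_of_le_of_finrank_le (fun y hy => mem_orthogonal_iff.2 fun x hx => hL x hx y hy)
    (by rw [finrank_orthogonal hB]; omega)).symm

lemma sup_eq_top_of_orthogonal_inf_orthogonal_eq_bot (hB : B.Nondegenerate)
    {P Q : Submodule K V} (h : B.orthogonal P ⊓ B.orthogonal Q = ⊥) : P ⊔ Q = ⊤ := by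
  have hbot : B.orthogonal (P ⊔ Q) = ⊥ :=
    eq_bot_iff.2 (h ▸ le_inf (orthogonal_le le_sup_left) (orthogonal_le le_sup_right))
  have hrank := finrank_orthogonal hB (P ⊔ Q)
  rw [hbot, finrank_bot] at hrank
  have := Submodule.finrank_le (P ⊔ Q)
  exact Submodule.eq_top_of_finrank_eq (by omega)

end Field

end BilinForm

end LinearMap

lemma Submodule.finrank_comap_add_finrank_of_surjective {K M N : Type*} [DivisionRing K]
    [AddCommGroup M] [Module K M] [FiniteDimensional K M] [AddCommGroup N] [Module K N]
    {f : M →ₗ[K] N} (hf : Function.Surjective f) (W : Submodule K N) :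
    finrank K (W.comap f) + finrank K N = finrank K W + finrank K M := by
  have : FiniteDimensional K N := Module.Finite.of_surjective f hf
  have hker : LinearMap.ker (W.mkQ ∘ₗ f) = W.comap f := by
    rw [LinearMap.ker_comp, Submodule.ker_mkQ]
  have hrange : LinearMap.range (W.mkQ ∘ₗ f) = ⊤ :=
    LinearMap.range_eq_top.2 (W.mkQ_surjective.comp hf)
  have hnullity := LinearMap.finrank_range_add_finrank_ker (W.mkQ ∘ₗ f)
  rw [hker, hrange, finrank_top] at hnullity
  have := W.finrank_quotient_add_finrank
  omega

namespace HoloSymplVariety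

variable (Y : HoloSymplVariety) (p : Y.pt)

lemma form_zero_left (w : Y.T p) : Y.form p 0 w = 0 := by
  simpa using Y.form_left p 1 0 0 w

lemma form_zero_right (u : Y.T p) : Y.form p u 0 = 0 := by
  simpa using Y.form_right p 1 u 0 0

def bilinForm : BilinForm ℂ (Y.T p) :=
  LinearMap.mk₂ ℂ (Y.form p)
    (fun u v w => by simpa using Y.form_left p 1 u v w)
    (fun c u w => by simpa [form_zero_left] using Y.form_left p c u 0 w)
    (fun u v w => by simpa using Y.form_right p 1 u v w)
    (fun c u v => by simpa [form_zero_right] using Y.form_right p c u v 0)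

lemma bilinForm_nondegenerate : (Y.bilinForm p).Nondegenerate :=
  (LinearMap.IsAlt.isRefl (B := Y.bilinForm p) (Y.form_alt p)).nondegenerate_iff_separatingLeft.2
    (Y.form_nondeg p)

end HoloSymplVariety

lemma IsLagrangianSubspace.orthogonal_eq_self {Y₁ Y₂ : HoloSymplVariety}
    {p : Y₁.pt} {q : Y₂.pt} {L : Submodule ℂ (Y₁.T p × Y₂.T q)}
    (hL : IsLagrangianSubspace Y₁ Y₂ p q L) :
    ((Y₁.bilinForm p).prod (Y₂.bilinForm q)).orthogonal L = L :=
  LinearMap.BilinForm.orthogonal_eq_self_of_isotropic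
    ((Y₁.bilinForm_nondegenerate p).prod (Y₂.bilinForm_nondegenerate q)) hL.1 hL.2

section TripleProduct

variable {Y₁ Y₂ Y₃ : HoloSymplVariety} {p₁ : Y₁.pt} {p₂ : Y₂.pt} {p₃ : Y₃.pt}
  {Λ₁₂ : Submodule ℂ (Y₁.T p₁ × Y₂.T p₂)} {Λ₂₃ : Submodule ℂ (Y₂.T p₂ × Y₃.T p₃)}

lemma dpi12_surjective : Function.Surjective (dpi12 Y₁ Y₂ Y₃ p₁ p₂ p₃) :=
  fun x => ⟨(x.1, x.2, 0), rfl⟩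

lemma dpi23_surjective : Function.Surjective (dpi23 Y₁ Y₂ Y₃ p₁ p₂ p₃) :=
  fun x => ⟨(0, x), rfl⟩

lemma comap_inr_inf_comap_inl_eq_bot
    (h : ∀ x ∈ Λ₁₂.comap (dpi12 Y₁ Y₂ Y₃ p₁ p₂ p₃) ⊓ Λ₂₃.comap (dpi23 Y₁ Y₂ Y₃ p₁ p₂ p₃),
      dpi13 Y₁ Y₂ Y₃ p₁ p₂ p₃ x = 0 → x = 0) :
    Λ₁₂.comap (LinearMap.inr ℂ _ _) ⊓ Λ₂₃.comap (LinearMap.inl ℂ _ _) = ⊥ := by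
  refine eq_bot_iff.2 fun v ⟨hv₁₂, hv₂₃⟩ => ?_
  have h0 : ((0, v, 0) : Y₁.T p₁ × Y₂.T p₂ × Y₃.T p₃) = 0 := h _ ⟨hv₁₂, hv₂₃⟩ rfl
  exact congrArg (fun x => x.2.1) h0

lemma comap_dpi12_sup_comap_dpi23_eq_top
    (h : Λ₁₂.map (LinearMap.snd ℂ _ _) ⊔ Λ₂₃.map (LinearMap.fst ℂ _ _) = ⊤) :
    Λ₁₂.comap (dpi12 Y₁ Y₂ Y₃ p₁ p₂ p₃) ⊔ Λ₂₃.comap (dpi23 Y₁ Y₂ Y₃ p₁ p₂ p₃) = ⊤ := by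
  refine eq_top_iff.2 fun ⟨u, v, w⟩ _ => ?_
  have hv : v ∈ Λ₁₂.map (LinearMap.snd ℂ _ _) ⊔ Λ₂₃.map (LinearMap.fst ℂ _ _) :=
    h ▸ Submodule.mem_top
  obtain ⟨_, ⟨a, ha, rfl⟩, _, ⟨b, hb, rfl⟩, hab⟩ := Submodule.mem_sup.1 hv
  refine Submodule.mem_sup.2 ⟨(a.1, a.2, w - b.2), ha, (u - a.1, b.1, b.2), hb, ?_⟩
  rw [Prod.mk_add_mk, Prod.mk_add_mk, add_sub_cancel, sub_add_cancel, ← hab]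
  rfl

end TripleProduct

theorem lagrangian_intersection_transverse_general (Y₁ Y₂ Y₃ : HoloSymplVariety)
    (L₁₂ : SmoothLagrangian Y₁ Y₂) (L₂₃ : SmoothLagrangian Y₂ Y₃)
    (htan : ∀ (p₁ : Y₁.pt) (p₂ : Y₂.pt) (p₃ : Y₃.pt) (h₁₂ : (p₁, p₂) ∈ L₁₂.L)
      (h₂₃ : (p₂, p₃) ∈ L₂₃.L)
      (x : Y₁.T p₁ × Y₂.T p₂ × Y₃.T p₃),
      x ∈ Submodule.comap (dpi12 Y₁ Y₂ Y₃ p₁ p₂ p₃) (L₁₂.tangent (p₁, p₂) h₁₂) ⊓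
          Submodule.comap (dpi23 Y₁ Y₂ Y₃ p₁ p₂ p₃) (L₂₃.tangent (p₂, p₃) h₂₃) →
      dpi13 Y₁ Y₂ Y₃ p₁ p₂ p₃ x = 0 → x = 0) :
    ∀ (p₁ : Y₁.pt) (p₂ : Y₂.pt) (p₃ : Y₃.pt) (h₁₂ : (p₁, p₂) ∈ L₁₂.L)
      (h₂₃ : (p₂, p₃) ∈ L₂₃.L),
      Module.finrank ℂ
        ↥(Submodule.comap (dpi12 Y₁ Y₂ Y₃ p₁ p₂ p₃) (L₁₂.tangent (p₁, p₂) h₁₂) ⊓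
            Submodule.comap (dpi23 Y₁ Y₂ Y₃ p₁ p₂ p₃) (L₂₃.tangent (p₂, p₃) h₂₃))
        + Module.finrank ℂ ↥(L₁₂.tangent (p₁, p₂) h₁₂)
        + Module.finrank ℂ ↥(L₂₃.tangent (p₂, p₃) h₂₃)
        = Module.finrank ℂ (Y₁.T p₁ × Y₂.T p₂ × Y₃.T p₃) := by
  intro p₁ p₂ p₃ h₁₂ h₂₃
  have hlag₁₂ := L₁₂.lagrangian (p₁, p₂) h₁₂
  have hlag₂₃ := L₂₃.lagrangian (p₂, p₃) h₂₃
  have hspan : (L₁₂.tangent (p₁, p₂) h₁₂).map (LinearMap.snd ℂ _ _) ⊔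
      (L₂₃.tangent (p₂, p₃) h₂₃).map (LinearMap.fst ℂ _ _) = ⊤ := by
    refine LinearMap.BilinForm.sup_eq_top_of_orthogonal_inf_orthogonal_eq_bot
      (Y₂.bilinForm_nondegenerate p₂) ?_
    rw [LinearMap.BilinForm.orthogonal_map_snd_of_orthogonal_eq_self hlag₁₂.orthogonal_eq_self,
      LinearMap.BilinForm.orthogonal_map_fst_of_orthogonal_eq_self hlag₂₃.orthogonal_eq_self]
    exact comap_inr_inf_comap_inl_eq_bot (htan p₁ p₂ p₃ h₁₂ h₂₃)
  have hsup_inf := Submodule.finrank_sup_add_finrank_inf_eq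
    ((L₁₂.tangent (p₁, p₂) h₁₂).comap (dpi12 Y₁ Y₂ Y₃ p₁ p₂ p₃))
    ((L₂₃.tangent (p₂, p₃) h₂₃).comap (dpi23 Y₁ Y₂ Y₃ p₁ p₂ p₃))
  rw [comap_dpi12_sup_comap_dpi23_eq_top hspan, finrank_top] at hsup_inf
  have hcomap₁₂ := Submodule.finrank_comap_add_finrank_of_surjective
    (dpi12_surjective (p₃ := p₃)) (L₁₂.tangent (p₁, p₂) h₁₂)
  have hcomap₂₃ := Submodule.finrank_comap_add_finrank_of_surjective
    (dpi23_surjective (p₁ := p₁)) (L₂₃.tangent (p₂, p₃) h₂₃)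
  have hdim₁₂ := hlag₁₂.2
  have hdim₂₃ := hlag₂₃.2
  simp only [finrank_prod] at hsup_inf hcomap₁₂ hcomap₂₃ hdim₁₂ hdim₂₃ ⊢
  omega

/-- Suppose `Y₁, Y₂, Y₃` are holomorphic symplectic varieties and
`L₁₂ ⊂ Y₁ × Y₂`, `L₂₃ ⊂ Y₂ × Y₃` are smooth Lagrangian subvarieties.  If the projection
`π₁₃` from the scheme-theoretic intersection `π₁₂⁻¹(L₁₂) ∩ π₂₃⁻¹(L₂₃)` to `Y₁ × Y₃` is an
isomorphism onto its image (encoded here by injectivity on the underlying points and on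
each tangent space of the scheme-theoretic intersection), then the intersection
`π₁₂⁻¹(L₁₂) ∩ π₂₃⁻¹(L₂₃) ⊂ Y₁ × Y₂ × Y₃` is transverse: at each of its points the
tangent space `π₁₂⁻¹(T L₁₂) ∩ π₂₃⁻¹(T L₂₃)` has dimension
`dim(Y₁ × Y₂ × Y₃) − dim L₁₂ − dim L₂₃`. -/
theorem lagrangian_intersection_transverse (Y₁ Y₂ Y₃ : HoloSymplVariety)
    (L₁₂ : SmoothLagrangian Y₁ Y₂) (L₂₃ : SmoothLagrangian Y₂ Y₃)
    (hpts : Set.InjOn (fun t : Y₁.pt × Y₂.pt × Y₃.pt => (t.1, t.2.2))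
      {t | (t.1, t.2.1) ∈ L₁₂.L ∧ (t.2.1, t.2.2) ∈ L₂₃.L})
    (htan : ∀ (p₁ : Y₁.pt) (p₂ : Y₂.pt) (p₃ : Y₃.pt) (h₁₂ : (p₁, p₂) ∈ L₁₂.L)
      (h₂₃ : (p₂, p₃) ∈ L₂₃.L)
      (x : Y₁.T p₁ × Y₂.T p₂ × Y₃.T p₃),
      x ∈ Submodule.comap (dpi12 Y₁ Y₂ Y₃ p₁ p₂ p₃) (L₁₂.tangent (p₁, p₂) h₁₂) ⊓
          Submodule.comap (dpi23 Y₁ Y₂ Y₃ p₁ p₂ p₃) (L₂₃.tangent (p₂, p₃) h₂₃) →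
      dpi13 Y₁ Y₂ Y₃ p₁ p₂ p₃ x = 0 → x = 0) :
    ∀ (p₁ : Y₁.pt) (p₂ : Y₂.pt) (p₃ : Y₃.pt) (h₁₂ : (p₁, p₂) ∈ L₁₂.L)
      (h₂₃ : (p₂, p₃) ∈ L₂₃.L),
      Module.finrank ℂ
        ↥(Submodule.comap (dpi12 Y₁ Y₂ Y₃ p₁ p₂ p₃) (L₁₂.tangent (p₁, p₂) h₁₂) ⊓
            Submodule.comap (dpi23 Y₁ Y₂ Y₃ p₁ p₂ p₃) (L₂₃.tangent (p₂, p₃) h₂₃))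
        + Module.finrank ℂ ↥(L₁₂.tangent (p₁, p₂) h₁₂)
        + Module.finrank ℂ ↥(L₂₃.tangent (p₂, p₃) h₂₃)
        = Module.finrank ℂ (Y₁.T p₁ × Y₂.T p₂ × Y₃.T p₃) :=
  lagrangian_intersection_transverse_general Y₁ Y₂ Y₃ L₁₂ L₂₃ htan
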